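/- Let p be an odd prime, u ∈ ℚ_p/ℤ_p, and v ∈ (ℚ_p/ℤ_p)^n, not both of order 1. Then the orbit of the pair (u,v) under the action of ℤ_p^× given by t·(u,v) = (t²u, tv) has cardinality at least (1/4)·max(ord(u), ord(v)), where ord denotes the order of an element in the respective torsion group. -/

import Mathlib

/-- `ℤ_p` as an additive subgroup of `ℚ_p`. -/
noncomputable def Zp (p : ℕ) [Fact p.Prime] : AddSubgroup ℚ_[p] :=
  (PadicInt.subring p).toAddSubgroup

/-- `ℤ_p^n` as an additive subgroup of `ℚ_p^n`. -/
noncomputable def ZpN (p : ℕ) [Fact p.Prime] (n : ℕ) : AddSubgroup (Fin n → ℚ_[p]) :=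
  AddSubgroup.pi Set.univ fun _ => (PadicInt.subring p).toAddSubgroup

/-!
Once `p ^ k` kills the class of `x`, the action of `t ∈ ℤ_pˣ` on it only depends on `t mod p ^ k`:
it is the action of `(ZMod (p ^ k))ˣ` on the cyclic group of order `p ^ k` generated by the class,
which is free. Hence the orbit of the `v`-component has `φ(p ^ k) ≥ p ^ k / 2` elements, and the
orbit of the `u`-component is in bijection with the squares of `(ZMod (p ^ k))ˣ`; for odd `p` this
group is cyclic, so there are at least `φ(p ^ k) / 2 ≥ p ^ k / 4` of them. The orbit of the pair
projects onto both component orbits.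
-/

open Filter QuotientAddGroup Set Topology

theorem IsCyclic.card_le_two_mul_card_range_sq {G : Type*} [CommGroup G] [IsCyclic G]
    [Finite G] : Nat.card G ≤ 2 * Nat.card (range fun g : G => g ^ 2) := by
  rw [← Subgroup.card_mul_index (powMonoidHom 2 : G →* G).ker, Subgroup.index_ker,
    IsCyclic.card_powMonoidHom_ker]
  exact Nat.mul_le_mul_right _ (Nat.gcd_le_right _ two_pos)

theorem Nat.pow_le_two_mul_totient_prime_pow {p : ℕ} (hp : p.Prime) (k : ℕ) :
    p ^ k ≤ 2 * (p ^ k).totient := by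
  cases k with
  | zero => simp
  | succ k =>
    rw [Nat.totient_prime_pow_succ hp, pow_succ]
    have := hp.two_le
    calc p ^ k * p ≤ p ^ k * (2 * (p - 1)) := Nat.mul_le_mul_left _ (by omega)
      _ = 2 * (p ^ k * (p - 1)) := by ring

theorem Set.card_range_comp_le {α β γ : Type*} {f : α → β} (g : β → γ) (hf : (range f).Finite) :
    Nat.card (range (g ∘ f)) ≤ Nat.card (range f) := by
  rw [range_comp]
  exact Nat.card_image_le hf

theorem ZMod.val_nsmul_injective {A : Type*} [AddLeftCancelMonoid A] {a : A} {N : ℕ} [NeZero N]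
    (ha : addOrderOf a = N) : Function.Injective fun s : ZMod N => s.val • a := by
  subst ha
  intro s s' h
  rw [← ZMod.natCast_zmod_val s, ← ZMod.natCast_zmod_val s', ZMod.natCast_eq_natCast_iff]
  exact nsmul_eq_nsmul_iff_modEq.mp h

theorem exists_addOrderOf_mk_eq_prime_pow {V : Type*} [AddCommGroup V] {L : AddSubgroup V}
    {p : ℕ} (hp : p.Prime) {x : V} (hx : ∃ K, p ^ K • x ∈ L) :
    ∃ k, addOrderOf (mk x : V ⧸ L) = p ^ k := by
  obtain ⟨K, hK⟩ := hx
  have hKx : p ^ K • (mk x : V ⧸ L) = 0 := by rwa [← mk_nsmul, eq_zero_iff]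
  obtain ⟨k, -, hk⟩ := (Nat.dvd_prime_pow hp).mp (addOrderOf_dvd_of_nsmul_eq_zero hKx)
  exact ⟨k, hk⟩

namespace PadicInt

variable {p : ℕ} [hp : Fact p.Prime]

theorem units_map_toZModPow_surjective (k : ℕ) :
    Function.Surjective (Units.map (toZModPow k : ℤ_[p] →+* ZMod (p ^ k)).toMonoidHom) := by
  rcases k.eq_zero_or_pos with rfl | hk
  · have : Subsingleton (ZMod (p ^ 0)) := ZMod.subsingleton_iff.mpr (pow_zero p)
    exact fun s => ⟨1, Units.ext (Subsingleton.elim _ _)⟩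
  · have : Nontrivial (ZMod (p ^ k)) :=
      ZMod.nontrivial_iff.mpr (Nat.one_lt_pow hk.ne' hp.out.one_lt).ne'
    have hsurj := ZMod.ringHom_surjective (toZModPow k : ℤ_[p] →+* ZMod (p ^ k))
    exact IsLocalRing.surjective_units_map_of_local_ringHom _ hsurj
      (IsLocalHom.of_surjective _ hsurj)

section Module

variable {V : Type*} [AddCommGroup V] [Module ℤ_[p] V] {L : AddSubgroup V}

theorem mk_smul_eq_val_toZModPow_nsmul (hL : ∀ (c : ℤ_[p]) (x : V), x ∈ L → c • x ∈ L)
    {k : ℕ} {x : V} (hx : p ^ k • x ∈ L) (t : ℤ_[p]) :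
    (mk (t • x) : V ⧸ L) = (toZModPow k t).val • (mk x : V ⧸ L) := by
  have hker : t - ((toZModPow k t).val : ℤ_[p]) ∈ Ideal.span {(p : ℤ_[p]) ^ k} := by
    rw [← ker_toZModPow, RingHom.mem_ker, map_sub, map_natCast, ZMod.natCast_zmod_val, sub_self]
  obtain ⟨c, hc⟩ := Ideal.mem_span_singleton'.mp hker
  rw [← mk_nsmul, eq_comm, QuotientAddGroup.eq]
  convert hL c _ hx using 1
  rw [← Nat.cast_smul_eq_nsmul ℤ_[p], ← Nat.cast_smul_eq_nsmul ℤ_[p], smul_smul, Nat.cast_pow, hc,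
    sub_smul]
  abel

theorem range_mk_pow_smul (hL : ∀ (c : ℤ_[p]) (x : V), x ∈ L → c • x ∈ L)
    {k : ℕ} {x : V} (hx : addOrderOf (mk x : V ⧸ L) = p ^ k) (m : ℕ) :
    range (fun t : ℤ_[p]ˣ => (mk ((t : ℤ_[p]) ^ m • x) : V ⧸ L)) =
      range fun s : (ZMod (p ^ k))ˣ => ((s ^ m : (ZMod (p ^ k))ˣ) : ZMod (p ^ k)).val •
        (mk x : V ⧸ L) := by
  have hxL : p ^ k • x ∈ L := by
    rw [← eq_zero_iff, mk_nsmul, ← hx, addOrderOf_nsmul_eq_zero]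
  have hcomp : (fun t : ℤ_[p]ˣ => (mk ((t : ℤ_[p]) ^ m • x) : V ⧸ L)) =
      (fun s : (ZMod (p ^ k))ˣ => ((s ^ m : (ZMod (p ^ k))ˣ) : ZMod (p ^ k)).val • (mk x : V ⧸ L))
        ∘ Units.map (toZModPow k : ℤ_[p] →+* ZMod (p ^ k)).toMonoidHom := by
    ext t
    simp [mk_smul_eq_val_toZModPow_nsmul hL hxL]
  rw [hcomp, (units_map_toZModPow_surjective k).range_comp]

theorem card_range_mk_pow_smul (hL : ∀ (c : ℤ_[p]) (x : V), x ∈ L → c • x ∈ L)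
    {k : ℕ} {x : V} (hx : addOrderOf (mk x : V ⧸ L) = p ^ k) (m : ℕ) :
    Nat.card (range fun t : ℤ_[p]ˣ => (mk ((t : ℤ_[p]) ^ m • x) : V ⧸ L)) =
      Nat.card (range fun s : (ZMod (p ^ k))ˣ => s ^ m) := by
  have : NeZero (p ^ k) := ⟨pow_ne_zero k hp.out.ne_zero⟩
  rw [range_mk_pow_smul hL hx, ← Nat.card_image_of_injective
    ((ZMod.val_nsmul_injective hx).comp Units.val_injective), ← range_comp]
  rfl

theorem pow_le_four_mul_card_range_mk_sq_smul (hodd : p ≠ 2)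
    (hL : ∀ (c : ℤ_[p]) (x : V), x ∈ L → c • x ∈ L)
    {k : ℕ} {x : V} (hx : addOrderOf (mk x : V ⧸ L) = p ^ k) :
    p ^ k ≤ 4 * Nat.card (range fun t : ℤ_[p]ˣ => (mk ((t : ℤ_[p]) ^ 2 • x) : V ⧸ L)) := by
  have := ZMod.isCyclic_units_of_prime_pow p hp.out hodd k
  rw [card_range_mk_pow_smul hL hx]
  calc p ^ k ≤ 2 * Nat.card (ZMod (p ^ k))ˣ := by
        rw [Nat.card_eq_fintype_card, ZMod.card_units_eq_totient]
        exact Nat.pow_le_two_mul_totient_prime_pow hp.out k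
    _ ≤ 2 * (2 * Nat.card (range fun s : (ZMod (p ^ k))ˣ => s ^ 2)) :=
        Nat.mul_le_mul_left 2 IsCyclic.card_le_two_mul_card_range_sq
    _ = 4 * Nat.card (range fun s : (ZMod (p ^ k))ˣ => s ^ 2) := by ring

theorem pow_le_two_mul_card_range_mk_smul (hL : ∀ (c : ℤ_[p]) (x : V), x ∈ L → c • x ∈ L)
    {k : ℕ} {x : V} (hx : addOrderOf (mk x : V ⧸ L) = p ^ k) :
    p ^ k ≤ 2 * Nat.card (range fun t : ℤ_[p]ˣ => (mk ((t : ℤ_[p]) • x) : V ⧸ L)) := by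
  have h := card_range_mk_pow_smul hL hx 1
  simp only [pow_one, range_id'] at h
  rw [h, Nat.card_univ, Nat.card_eq_fintype_card, ZMod.card_units_eq_totient]
  exact Nat.pow_le_two_mul_totient_prime_pow hp.out k

end Module

end PadicInt

section Padic

variable {p : ℕ} [Fact p.Prime]

theorem smul_mem_Zp (c : ℤ_[p]) (x : ℚ_[p]) (hx : x ∈ Zp p) : c • x ∈ Zp p :=
  (PadicInt.subring p).mul_mem c.2 hx

theorem smul_mem_ZpN {n : ℕ} (c : ℤ_[p]) (v : Fin n → ℚ_[p]) (hv : v ∈ ZpN p n) :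
    c • v ∈ ZpN p n :=
  (AddSubgroup.mem_pi _).mpr fun i _ =>
    smul_mem_Zp c (v i) ((AddSubgroup.mem_pi _).mp hv i trivial)

theorem eventually_nsmul_mem_Zp (x : ℚ_[p]) : ∀ᶠ K in atTop, p ^ K • x ∈ Zp p := by
  have h : Tendsto (fun K : ℕ => ‖(p : ℚ_[p])‖ ^ K * ‖x‖) atTop (𝓝 0) := by
    simpa using (tendsto_pow_atTop_nhds_zero_of_lt_one (norm_nonneg _)
      (Padic.norm_p_lt_one (p := p))).mul_const ‖x‖
  filter_upwards [h.eventually_lt_const zero_lt_one] with K hK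
  show ‖p ^ K • x‖ ≤ 1
  rw [nsmul_eq_mul, norm_mul, Nat.cast_pow, norm_pow]
  exact hK.le

theorem eventually_nsmul_mem_ZpN {n : ℕ} (v : Fin n → ℚ_[p]) :
    ∀ᶠ K in atTop, p ^ K • v ∈ ZpN p n := by
  filter_upwards [eventually_all.mpr fun i => eventually_nsmul_mem_Zp (v i)] with K hK i _
  exact hK i

end Padic

theorem Set.max_le_mul_card_range_of_fst_snd {α β γ : Type*} {F : α → β × γ} {a b c : ℕ}
    (ha : a ≠ 0) (hb : b ≠ 0) (hfst : a ≤ c * Nat.card (range (Prod.fst ∘ F)))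
    (hsnd : b ≤ c * Nat.card (range (Prod.snd ∘ F))) :
    max a b ≤ c * Nat.card (range F) := by
  have : Finite (range (Prod.fst ∘ F)) :=
    Nat.finite_of_card_ne_zero fun h0 => ha (by simpa [h0] using hfst)
  have : Finite (range (Prod.snd ∘ F)) :=
    Nat.finite_of_card_ne_zero fun h0 => hb (by simpa [h0] using hsnd)
  have hfin : (range F).Finite :=
    ((toFinite (range (Prod.fst ∘ F))).prod (toFinite (range (Prod.snd ∘ F)))).subset
      (range_subset_iff.mpr fun t => ⟨mem_range_self t, mem_range_self t⟩)
  exact max_le (hfst.trans (Nat.mul_le_mul_left c (card_range_comp_le _ hfin)))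
    (hsnd.trans (Nat.mul_le_mul_left c (card_range_comp_le _ hfin)))

theorem orbit_card_ge_quarter_order_general (p n : ℕ) [Fact p.Prime] (hodd : p ≠ 2)
    (u : ℚ_[p]) (v : Fin n → ℚ_[p]) :
    max (addOrderOf ((QuotientAddGroup.mk u : ℚ_[p] ⧸ Zp p)))
        (addOrderOf ((QuotientAddGroup.mk v : (Fin n → ℚ_[p]) ⧸ ZpN p n))) ≤
      4 * Nat.card (Set.range (fun t : ℤ_[p]ˣ =>
        ((QuotientAddGroup.mk (((t : ℤ_[p]) : ℚ_[p]) ^ 2 * u) : ℚ_[p] ⧸ Zp p),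
         (QuotientAddGroup.mk (fun i => ((t : ℤ_[p]) : ℚ_[p]) * v i) :
            (Fin n → ℚ_[p]) ⧸ ZpN p n)))) := by
  have hp : p.Prime := Fact.out
  obtain ⟨k, hk⟩ := exists_addOrderOf_mk_eq_prime_pow hp (eventually_nsmul_mem_Zp u).exists
  obtain ⟨l, hl⟩ := exists_addOrderOf_mk_eq_prime_pow hp (eventually_nsmul_mem_ZpN v).exists
  have hu := PadicInt.pow_le_four_mul_card_range_mk_sq_smul hodd smul_mem_Zp hk
  have hv := PadicInt.pow_le_two_mul_card_range_mk_smul smul_mem_ZpN hl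
  rw [hk, hl]
  -- `hu` and `hv` are about the two components of the orbit map, since `t • x = ↑t * x`
  exact max_le_mul_card_range_of_fst_snd (pow_ne_zero _ hp.ne_zero) (pow_ne_zero _ hp.ne_zero) hu
    (hv.trans (Nat.mul_le_mul_right _ (by norm_num)))

/-- let `p` be an odd prime, `u ∈ ℚ_p/ℤ_p`, `v ∈ (ℚ_p/ℤ_p)^n`, not both
of order 1.  The orbit of `(u,v)` under `t·(u,v) = (t²u, tv)` for `t ∈ ℤ_pˣ` has
cardinality at least `(1/4)·max(ord u, ord v)`. -/
theorem orbit_card_ge_quarter_order (p n : ℕ) [Fact p.Prime] (hodd : p ≠ 2)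
    (u : ℚ_[p]) (v : Fin n → ℚ_[p])
    (hne : ¬(addOrderOf ((QuotientAddGroup.mk u : ℚ_[p] ⧸ Zp p)) = 1 ∧
        addOrderOf ((QuotientAddGroup.mk v : (Fin n → ℚ_[p]) ⧸ ZpN p n)) = 1)) :
    max (addOrderOf ((QuotientAddGroup.mk u : ℚ_[p] ⧸ Zp p)))
        (addOrderOf ((QuotientAddGroup.mk v : (Fin n → ℚ_[p]) ⧸ ZpN p n))) ≤
      4 * Nat.card (Set.range (fun t : ℤ_[p]ˣ =>
        ((QuotientAddGroup.mk (((t : ℤ_[p]) : ℚ_[p]) ^ 2 * u) : ℚ_[p] ⧸ Zp p),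
         (QuotientAddGroup.mk (fun i => ((t : ℤ_[p]) : ℚ_[p]) * v i) :
            (Fin n → ℚ_[p]) ⧸ ZpN p n)))) :=
  orbit_card_ge_quarter_order_general p n hodd u v
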